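/- π³ = (250/(φ³·√(2+φ)))·Σ_{n=-∞}^{∞} 1/(1-10n)³, where φ = (1+√5)/2 and the sum over all integers n is interpreted as the limit of symmetric partial sums. -/

import Mathlib

/-!
On `[0, 1]` the Fourier series `∑ sin (2πnx) / n³` sums to `π³ x (x - 1) (2x - 1) / 3`, a multiple
of the Bernoulli polynomial `B₃`. Orthogonality of the sines `sin (2πam / N)` over `a < N` turns a
combination of these series at the points `a / N` into `∑ χ(m) / m³`, where `χ` is `1` on
`m ≡ 1` and `-1` on `m ≡ -1 (mod N)`; for `N ≥ 3` and an odd exponent this is the bilateral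
series `∑ₙ 1 / (1 - Nn)³`, reindexed by `m = |1 - Nn|`. For `N = 10` the finite sum is
`π³ (2 sin (π/5) + 3 sin (2π/5)) / 125`, and `sin (2π/5) = φ sin (π/5) = √(2 + φ) / 2` together
with `φ⁴ = 3φ + 2` gives the closed form.
-/

open Real Filter Finset
open scoped goldenRatio

theorem sum_range_cos_two_pi_mul_div {N : ℕ} (hN : N ≠ 0) (k : ℤ) :
    ∑ a ∈ range N, cos (2 * π * a * k / N) = if (N : ℤ) ∣ k then (N : ℝ) else 0 := by
  have hN' : (N : ℝ) ≠ 0 := by exact_mod_cast hN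
  split_ifs with hk
  · obtain ⟨j, rfl⟩ := hk
    have hterm (a : ℕ) : cos (2 * π * a * ((N * j : ℤ) : ℝ) / N) = 1 := by
      rw [show 2 * π * a * ((N * j : ℤ) : ℝ) / N = ((a * j : ℤ) : ℝ) * (2 * π) by
        push_cast; field_simp]
      exact cos_int_mul_two_pi _
    rw [sum_congr rfl fun a _ => hterm a]
    simp
  · set ζ : ℂ := Complex.exp (↑(2 * π * k / N) * Complex.I)
    have hpow (a : ℕ) : ζ ^ a = Complex.exp (↑(2 * π * a * k / N) * Complex.I) := by
      rw [← Complex.exp_nat_mul]; push_cast; ring_nf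
    have hζN : ζ ^ N = 1 := by
      rw [hpow, ← Complex.exp_int_mul_two_pi_mul_I k]
      congr 1
      push_cast; field_simp
    have hζ : ζ ≠ 1 := by
      intro h
      obtain ⟨n, hn⟩ := Complex.exp_eq_one_iff.mp h
      have : (2 * π * k / N : ℝ) = n * (2 * π) := by simpa using congrArg Complex.im hn
      field_simp at this
      exact hk ⟨n, by exact_mod_cast (by nlinarith [pi_pos] : (k : ℝ) = N * n)⟩
    have hsum : ∑ a ∈ range N, ζ ^ a = 0 := by
      rw [geom_sum_eq hζ, hζN, sub_self, zero_div]
    simpa only [Complex.re_sum, hpow, Complex.exp_ofReal_mul_I_re, Complex.zero_re]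
      using congrArg Complex.re hsum

def pmOneIndicator (N : ℕ) (m : ℤ) : ℝ :=
  (if (N : ℤ) ∣ m - 1 then 1 else 0) - (if (N : ℤ) ∣ m + 1 then 1 else 0)

theorem sum_range_sin_mul_sin {N : ℕ} (hN : N ≠ 0) (m : ℤ) :
    ∑ a ∈ range N, sin (2 * π * a / N) * sin (2 * π * a * m / N) =
      N / 2 * pmOneIndicator N m := by
  have hterm (a : ℕ) : sin (2 * π * a / N) * sin (2 * π * a * m / N) =
      (cos (2 * π * a * ((m - 1 : ℤ) : ℝ) / N) - cos (2 * π * a * ((m + 1 : ℤ) : ℝ) / N)) / 2 := by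
    rw [mul_comm, eq_div_iff two_ne_zero, mul_comm, ← mul_assoc, two_mul_sin_mul_sin]
    push_cast
    ring_nf
  rw [sum_congr rfl fun a _ => hterm a, ← sum_div, sum_sub_distrib,
    sum_range_cos_two_pi_mul_div hN, sum_range_cos_two_pi_mul_div hN, pmOneIndicator]
  split_ifs <;> ring

theorem hasSum_one_div_nat_pow_three_mul_sin {x : ℝ} (hx : x ∈ Set.Icc (0 : ℝ) 1) :
    HasSum (fun n : ℕ => 1 / (n : ℝ) ^ 3 * sin (2 * π * n * x))
      (π ^ 3 / 3 * (x * (x - 1) * (2 * x - 1))) := by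
  have h : HasSum (fun n : ℕ => 1 / (n : ℝ) ^ 3 * sin (2 * π * n * x))
      ((-1) ^ 2 * (2 * π) ^ 3 / 2 / (Nat.factorial 3 : ℝ) *
        ((Polynomial.bernoulli 3).map (algebraMap ℚ ℝ)).eval x) :=
    hasSum_one_div_nat_pow_mul_sin one_ne_zero hx
  simp only [Polynomial.eval_map, Polynomial.bernoulli, sum_range_succ, sum_range_zero] at h
  convert h using 1
  norm_num [bernoulli_eq_bernoulli'_of_ne_one, Nat.factorial]
  ring

theorem hasSum_pmOneIndicator_div_pow_three {N : ℕ} (hN : N ≠ 0) :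
    HasSum (fun m : ℕ => pmOneIndicator N m / (m : ℝ) ^ 3)
      (2 * π ^ 3 / (3 * N) *
        ∑ a ∈ range N, sin (2 * π * a / N) * (a / N * (a / N - 1) * (2 * (a / N) - 1))) := by
  have hmem (a : ℕ) (ha : a ∈ range N) : (a / N : ℝ) ∈ Set.Icc (0 : ℝ) 1 :=
    ⟨by positivity, div_le_one_of_le₀ (by exact_mod_cast (mem_range.mp ha).le) (Nat.cast_nonneg N)⟩
  have h := (hasSum_sum fun a ha => (hasSum_one_div_nat_pow_three_mul_sin (hmem a ha)).mul_left
    (sin (2 * π * a / N))).mul_left (2 / (N : ℝ))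
  have hval : 2 / (N : ℝ) * ∑ a ∈ range N, sin (2 * π * a / N) *
      (π ^ 3 / 3 * (a / N * (a / N - 1) * (2 * (a / N) - 1))) =
      2 * π ^ 3 / (3 * N) *
        ∑ a ∈ range N, sin (2 * π * a / N) * (a / N * (a / N - 1) * (2 * (a / N) - 1)) := by
    rw [mul_sum, mul_sum]
    exact sum_congr rfl fun a _ => by ring
  rw [← hval]
  refine h.congr_fun fun m => ?_
  rw [show pmOneIndicator N m / (m : ℝ) ^ 3 = 2 / N * (N / 2 * pmOneIndicator N m * (1 / m ^ 3)) by
    field_simp, ← sum_range_sin_mul_sin hN m, sum_mul]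
  refine congrArg _ (sum_congr rfl fun a _ => ?_)
  push_cast
  ring_nf

section

variable {N : ℕ}

lemma not_dvd_two_of_three_le (hN : 3 ≤ N) : ¬ (N : ℤ) ∣ 2 := fun h => by
  have := Int.le_of_dvd two_pos h
  omega

lemma pmOneIndicator_of_dvd_sub_one (hN : 3 ≤ N) {m : ℤ} (h : (N : ℤ) ∣ m - 1) :
    pmOneIndicator N m = 1 := by
  have : ¬ (N : ℤ) ∣ m + 1 := fun h' =>
    not_dvd_two_of_three_le hN (by simpa using dvd_sub h' h)
  simp [pmOneIndicator, h, this]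

lemma pmOneIndicator_of_dvd_add_one (hN : 3 ≤ N) {m : ℤ} (h : (N : ℤ) ∣ m + 1) :
    pmOneIndicator N m = -1 := by
  have : ¬ (N : ℤ) ∣ m - 1 := fun h' =>
    not_dvd_two_of_three_le hN (by simpa using dvd_sub h h')
  simp [pmOneIndicator, h, this]

lemma pmOneIndicator_natAbs_div_pow (hN : 3 ≤ N) {k : ℕ} (hk : Odd k) {x : ℤ}
    (hx : (N : ℤ) ∣ x - 1) :
    pmOneIndicator N x.natAbs / (x.natAbs : ℝ) ^ k = 1 / (x : ℝ) ^ k := by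
  rw [Int.natCast_natAbs, Nat.cast_natAbs, Int.cast_abs]
  rcases le_or_gt 0 x with hx0 | hx0
  · rw [abs_of_nonneg hx0, abs_of_nonneg (by exact_mod_cast hx0),
      pmOneIndicator_of_dvd_sub_one hN hx]
  · rw [abs_of_neg hx0, abs_of_neg (by exact_mod_cast hx0),
      pmOneIndicator_of_dvd_add_one hN (by simpa [neg_add_eq_sub] using dvd_neg.mpr hx),
      hk.neg_pow, div_neg, neg_div, neg_neg]

theorem hasSum_int_one_div_one_sub_mul_pow_iff (hN : 3 ≤ N) {k : ℕ} (hk : Odd k) {S : ℝ} :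
    HasSum (fun n : ℤ => 1 / (1 - N * n : ℝ) ^ k) S ↔
      HasSum (fun m : ℕ => pmOneIndicator N m / (m : ℝ) ^ k) S := by
  set u : ℤ → ℕ := fun n => (1 - N * n).natAbs
  have hu : Function.Injective u := by
    intro n n' h
    rcases Int.natAbs_eq_natAbs_iff.mp h with h | h
    · simpa [show N ≠ 0 by omega] using h
    · exact absurd ⟨n + n', by linarith⟩ (not_dvd_two_of_three_le hN)
  have hzero : ∀ m ∉ Set.range u, pmOneIndicator N m / (m : ℝ) ^ k = 0 := by
    intro m hm
    have h1 : ¬ (N : ℤ) ∣ m - 1 := fun ⟨q, hq⟩ => hm ⟨-q, by simp [u]; omega⟩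
    have h2 : ¬ (N : ℤ) ∣ m + 1 := fun ⟨q, hq⟩ => hm ⟨q, by simp [u]; omega⟩
    simp [pmOneIndicator, h1, h2]
  have hcomp : (fun m : ℕ => pmOneIndicator N m / (m : ℝ) ^ k) ∘ u =
      fun n : ℤ => 1 / (1 - N * n : ℝ) ^ k := by
    funext n
    exact (pmOneIndicator_natAbs_div_pow hN hk (x := 1 - N * n) ⟨-n, by ring⟩).trans
      (by push_cast; rfl)
  rw [← hu.hasSum_iff hzero, hcomp]

end

theorem hasSum_int_one_div_one_sub_mul_pow_three {N : ℕ} (hN : 3 ≤ N) :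
    HasSum (fun n : ℤ => 1 / (1 - N * n : ℝ) ^ 3)
      (2 * π ^ 3 / (3 * N) *
        ∑ a ∈ range N, sin (2 * π * a / N) * (a / N * (a / N - 1) * (2 * (a / N) - 1))) :=
  (hasSum_int_one_div_one_sub_mul_pow_iff hN (by decide)).mpr
    (hasSum_pmOneIndicator_div_pow_three (by omega))

lemma sum_range_ten_sin_mul_cubic :
    ∑ a ∈ range 10, sin (2 * π * a / 10) * (a / 10 * (a / 10 - 1) * (2 * (a / 10) - 1)) =
      3 / 25 * (2 * sin (π / 5) + 3 * sin (2 * π / 5)) := by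
  have e1 : sin (2 * π / 10) = sin (π / 5) := by ring_nf
  have e2 : sin (2 * π * 2 / 10) = sin (2 * π / 5) := by ring_nf
  have e3 : sin (2 * π * 3 / 10) = sin (2 * π / 5) := by rw [← sin_pi_sub]; ring_nf
  have e4 : sin (2 * π * 4 / 10) = sin (π / 5) := by rw [← sin_pi_sub]; ring_nf
  have e6 : sin (2 * π * 6 / 10) = -sin (π / 5) := by rw [← sin_add_pi]; ring_nf
  have e7 : sin (2 * π * 7 / 10) = -sin (2 * π / 5) := by rw [← sin_add_pi]; ring_nf
  have e8 : sin (2 * π * 8 / 10) = -sin (2 * π / 5) := by rw [← sin_two_pi_sub]; ring_nf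
  have e9 : sin (2 * π * 9 / 10) = -sin (π / 5) := by rw [← sin_two_pi_sub]; ring_nf
  simp only [sum_range_succ, sum_range_zero]
  norm_num
  rw [e1, e2, e3, e4, e6, e7, e8, e9]
  ring

lemma cos_pi_div_five_eq_goldenRatio_div_two : cos (π / 5) = φ / 2 := by
  rw [cos_pi_div_five]; ring

lemma sin_two_pi_div_five_eq_goldenRatio_mul : sin (2 * π / 5) = φ * sin (π / 5) := by
  rw [show 2 * π / 5 = 2 * (π / 5) by ring, sin_two_mul, cos_pi_div_five_eq_goldenRatio_div_two]
  ring

lemma sqrt_two_add_goldenRatio : √(2 + φ) = 2 * sin (2 * π / 5) := by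
  have hcos : cos (2 * π / 5) = (φ - 1) / 2 := by
    rw [show 2 * π / 5 = 2 * (π / 5) by ring, cos_two_mul, cos_pi_div_five_eq_goldenRatio_div_two]
    linear_combination goldenRatio_sq / 2
  have hsin : 0 < sin (2 * π / 5) := sin_pos_of_pos_of_lt_pi (by positivity) (by linarith [pi_pos])
  rw [sqrt_eq_iff_mul_self_eq_of_pos (by positivity)]
  linear_combination 4 * sin_sq_add_cos_sq (2 * π / 5) -
    4 * (cos (2 * π / 5) + (φ - 1) / 2) * hcos - goldenRatio_sq

theorem pi_cubed_golden_ten :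
    ∃ S : ℝ,
      Tendsto (fun N : ℕ => ∑ n ∈ Finset.Icc (-(N : ℤ)) (N : ℤ), 1 / ((1 : ℝ) - 10 * n) ^ 3)
        atTop (nhds S) ∧
      π ^ 3 = (250 / (((1 + Real.sqrt 5) / 2) ^ 3 *
        Real.sqrt (2 + (1 + Real.sqrt 5) / 2))) * S := by
  have hS := hasSum_int_one_div_one_sub_mul_pow_three (N := 10) (by norm_num)
  simp only [Nat.cast_ofNat] at hS
  refine ⟨_, SummationFilter.hasSum_symmetricIcc_iff.mp
    (hS.mono_left (SummationFilter.symmetricIcc ℤ).le_atTop), ?_⟩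
  show π ^ 3 = 250 / (φ ^ 3 * √(2 + φ)) * _
  have hsin : 0 < sin (π / 5) := sin_pos_of_pos_of_lt_pi (by positivity) (by linarith [pi_pos])
  rw [sum_range_ten_sin_mul_cubic, sqrt_two_add_goldenRatio, sin_two_pi_div_five_eq_goldenRatio_mul]
  have hφ : φ ^ 4 = 3 * φ + 2 := by linear_combination (φ ^ 2 + φ + 2) * goldenRatio_sq
  field_simp
  linear_combination 4000 * hφ
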